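/- Let A ∈ ℝ^{n×n} be symmetric, fix a partition of {1,…,n} into nonempty clusters S_1,…,S_r with sizes m_k, let β ∈ ℝ, and let Λ be the matrix of the dual construction. Then Λ·𝟙_{S_k} = 0 for every cluster k, where 𝟙_{S_k} ∈ ℝ^n is the indicator vector of S_k; consequently Λ·X0 = 0, where X0 is the normalized ground-truth clustering matrix with (X0)_{ij} = 1/m_k if i and j both lie in S_k and 0 otherwise. -/

import Mathlib

open Matrix BigOperators

noncomputable section

/-- The cluster `S_k` of a cluster assignment `z`. -/
def cluster {n r : ℕ} (z : Fin n → Fin r) (k : Fin r) : Finset (Fin n) :=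
  Finset.univ.filter (fun i => z i = k)

/-- The cluster size `m_k`. -/
def csize {n r : ℕ} (z : Fin n → Fin r) (k : Fin r) : ℕ := (cluster z k).card

/-- `d_u(S_k) = Σ_{j ∈ S_k} A_{uj}`, the number of edges from node `u` to cluster `k`. -/
def deg {n r : ℕ} (A : Matrix (Fin n) (Fin n) ℝ) (z : Fin n → Fin r)
    (u : Fin n) (k : Fin r) : ℝ :=
  ∑ j ∈ cluster z k, A u j

/-- `𝟙ᵀ A_{S_k S_ℓ} 𝟙 = Σ_{i ∈ S_k} Σ_{j ∈ S_ℓ} A_{ij}`. -/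
def blocksum {n r : ℕ} (A : Matrix (Fin n) (Fin n) ℝ) (z : Fin n → Fin r)
    (k ℓ : Fin r) : ℝ :=
  ∑ i ∈ cluster z k, ∑ j ∈ cluster z ℓ, A i j

/-- `φ_k = −(1/2)·(β + 𝟙ᵀA_{S_k}𝟙/m_k)` of the dual construction. -/
def phi {n r : ℕ} (A : Matrix (Fin n) (Fin n) ℝ) (z : Fin n → Fin r) (β : ℝ)
    (k : Fin r) : ℝ :=
  -(1 / 2) * (β + blocksum A z k k / (csize z k : ℝ))

/-- The dual vector `α`, defined blockwise by `α_{S_k} = (A_{S_k}𝟙 + φ_k·𝟙)/m_k`;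
its entry at a node `u ∈ S_k` is `(d_u(S_k) + φ_k)/m_k`. -/
def alpha {n r : ℕ} (A : Matrix (Fin n) (Fin n) ℝ) (z : Fin n → Fin r) (β : ℝ)
    (u : Fin n) : ℝ :=
  (deg A z u (z u) + phi A z β (z u)) / (csize z (z u) : ℝ)

/-- The dual matrix `Λ`, defined blockwise by
`Λ_{S_k} = −A_{S_k} + 𝟙α_{S_k}ᵀ + α_{S_k}𝟙ᵀ + βI` and, for `k ≠ ℓ`,
`Λ_{S_kS_ℓ} = −(I − E_{m_k}/m_k)·A_{S_kS_ℓ}·(I − E_{m_ℓ}/m_ℓ)`. -/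
def Lam {n r : ℕ} (A : Matrix (Fin n) (Fin n) ℝ) (z : Fin n → Fin r) (β : ℝ) :
    Matrix (Fin n) (Fin n) ℝ :=
  Matrix.of fun u v =>
    if z u = z v then
      -A u v + alpha A z β u + alpha A z β v + (if u = v then β else 0)
    else
      -(A u v - (∑ i ∈ cluster z (z u), A i v) / (csize z (z u) : ℝ)
          - (∑ j ∈ cluster z (z v), A u j) / (csize z (z v) : ℝ)
          + blocksum A z (z u) (z v) / ((csize z (z u) : ℝ) * (csize z (z v) : ℝ)))

/-- The dual matrix `Γ`, defined blockwise by `Γ_{S_k} = 0` and, for `k ≠ ℓ`,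
`Γ_{S_kS_ℓ} = −A_{S_kS_ℓ} − Λ_{S_kS_ℓ} + 𝟙α_{S_ℓ}ᵀ + α_{S_k}𝟙ᵀ`. -/
def Gam {n r : ℕ} (A : Matrix (Fin n) (Fin n) ℝ) (z : Fin n → Fin r) (β : ℝ) :
    Matrix (Fin n) (Fin n) ℝ :=
  Matrix.of fun u v =>
    if z u = z v then 0
    else -A u v - Lam A z β u v + alpha A z β v + alpha A z β u

/-- The normalized ground-truth clustering matrix `X0`. -/
def X0 {n r : ℕ} (z : Fin n → Fin r) : Matrix (Fin n) (Fin n) ℝ :=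
  Matrix.of fun i j => if z i = z j then (1 : ℝ) / (csize z (z i)) else 0

/-- The indicator vector `𝟙_{S_k}` of cluster `k`. -/
def indic {n r : ℕ} (z : Fin n → Fin r) (k : Fin r) : Fin n → ℝ :=
  fun i => if z i = k then 1 else 0

/-!
Row by row, `Λ·𝟙_{S_k}` is a sum over `S_k`. For a row `u ∈ S_k` that sum is
`-d_u(S_k) + m_k α_u + 𝟙ᵀα_{S_k} + β = 2φ_k + 𝟙ᵀA_{S_k}𝟙/m_k + β`, which `φ_k` was chosen to
make vanish; for `u ∉ S_k` it vanishes because the projector `I − E_{m_k}/m_k` kills `𝟙`.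
The columns of `X0` are the vectors `𝟙_{S_k}/m_k`, so `Λ·X0 = 0` follows.
-/

section DualConstruction

variable {n r : ℕ} {z : Fin n → Fin r} {k : Fin r} {u : Fin n}

@[simp]
lemma mem_cluster : u ∈ cluster z k ↔ z u = k := by
  simp [cluster]

lemma csize_ne_zero_of_nonempty (h : (cluster z k).Nonempty) : (csize z k : ℝ) ≠ 0 := by
  simpa [csize] using h.card_ne_zero

lemma sum_cluster_alpha (A : Matrix (Fin n) (Fin n) ℝ) (β : ℝ) (hk : (csize z k : ℝ) ≠ 0) :
    ∑ v ∈ cluster z k, alpha A z β v = blocksum A z k k / csize z k + phi A z β k := by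
  have halpha : ∀ v ∈ cluster z k, alpha A z β v = (deg A z v k + phi A z β k) / csize z k := by
    intro v hv
    rw [alpha, mem_cluster.mp hv]
  rw [Finset.sum_congr rfl halpha, ← Finset.sum_div, Finset.sum_add_distrib, Finset.sum_const,
    nsmul_eq_mul]
  change (blocksum A z k k + (csize z k : ℝ) * _) / _ = _
  field_simp

lemma sum_cluster_Lam_of_eq (A : Matrix (Fin n) (Fin n) ℝ) (β : ℝ) (hu : z u = k) :
    ∑ v ∈ cluster z k, Lam A z β u v = 0 := by
  have hk : (csize z k : ℝ) ≠ 0 := csize_ne_zero_of_nonempty ⟨u, mem_cluster.mpr hu⟩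
  have hLam : ∀ v ∈ cluster z k,
      Lam A z β u v = -A u v + alpha A z β u + alpha A z β v + if u = v then β else 0 := by
    intro v hv
    simp [Lam, hu, mem_cluster.mp hv]
  rw [Finset.sum_congr rfl hLam]
  simp only [Finset.sum_add_distrib, Finset.sum_neg_distrib, Finset.sum_const, nsmul_eq_mul,
    Finset.sum_ite_eq, mem_cluster.mpr hu, if_true, sum_cluster_alpha A β hk]
  change -deg A z u k + (csize z k : ℝ) * alpha A z β u + (_ + _) + β = 0
  rw [alpha, hu, phi]
  field_simp
  ring

lemma sum_cluster_Lam_of_ne (A : Matrix (Fin n) (Fin n) ℝ) (β : ℝ) (hu : z u ≠ k)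
    (hk : (csize z k : ℝ) ≠ 0) :
    ∑ v ∈ cluster z k, Lam A z β u v = 0 := by
  have hLam : ∀ v ∈ cluster z k, Lam A z β u v =
      -A u v + (∑ i ∈ cluster z (z u), A i v) / csize z (z u) + deg A z u k / csize z k
        - blocksum A z (z u) k / (csize z (z u) * csize z k) := by
    intro v hv
    simp only [Lam, Matrix.of_apply, mem_cluster.mp hv, if_neg hu, deg]
    ring
  have hm : (csize z (z u) : ℝ) ≠ 0 := csize_ne_zero_of_nonempty ⟨u, mem_cluster.mpr rfl⟩
  rw [Finset.sum_congr rfl hLam]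
  simp only [Finset.sum_sub_distrib, Finset.sum_add_distrib, Finset.sum_neg_distrib,
    ← Finset.sum_div, Finset.sum_const, nsmul_eq_mul]
  rw [Finset.sum_comm]
  change -deg A z u k + blocksum A z (z u) k / _ + (csize z k : ℝ) * _ / _
    - (csize z k : ℝ) * _ / _ = 0
  field_simp
  ring

lemma sum_cluster_Lam (A : Matrix (Fin n) (Fin n) ℝ) (β : ℝ) (k : Fin r) (u : Fin n) :
    ∑ v ∈ cluster z k, Lam A z β u v = 0 := by
  rcases (cluster z k).eq_empty_or_nonempty with hempty | hne
  · simp [hempty]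
  by_cases hu : z u = k
  · exact sum_cluster_Lam_of_eq A β hu
  · exact sum_cluster_Lam_of_ne A β hu (csize_ne_zero_of_nonempty hne)

lemma mulVec_indic_apply (M : Matrix (Fin n) (Fin n) ℝ) (k : Fin r) (u : Fin n) :
    (M *ᵥ indic z k) u = ∑ v ∈ cluster z k, M u v := by
  simp [mulVec, dotProduct, indic, cluster, Finset.sum_filter]

lemma X0_apply_eq_indic_div (i j : Fin n) : X0 z i j = indic z (z j) i / csize z (z j) := by
  by_cases h : z i = z j <;> simp [X0, indic, h]

lemma mul_X0_eq_zero_of_mulVec_indic {M : Matrix (Fin n) (Fin n) ℝ}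
    (hM : ∀ k, M *ᵥ indic z k = 0) : M * X0 z = 0 := by
  ext u j
  have hcol := congrFun (hM (z j)) u
  simp only [mulVec, dotProduct, Pi.zero_apply] at hcol
  simp [mul_apply, X0_apply_eq_indic_div, ← mul_div_assoc, ← Finset.sum_div, hcol]

end DualConstruction

theorem Lam_mulVec_indicator_eq_zero_general (n r : ℕ)
    (z : Fin n → Fin r)
    (A : Matrix (Fin n) (Fin n) ℝ) (β : ℝ) :
    (∀ k : Fin r, (Lam A z β).mulVec (indic z k) = 0) ∧
      Lam A z β * X0 z = 0 := by
  have hLam : ∀ k, Lam A z β *ᵥ indic z k = 0 := fun k ↦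
    funext fun u ↦ (mulVec_indic_apply _ k u).trans (sum_cluster_Lam A β k u)
  exact ⟨hLam, mul_X0_eq_zero_of_mulVec_indic hLam⟩

/-- The dual matrix `Λ` annihilates each cluster indicator vector `𝟙_{S_k}`, and
consequently `Λ·X0 = 0`. -/
theorem Lam_mulVec_indicator_eq_zero (n r : ℕ) (hn : 1 ≤ n) (hr : 1 ≤ r)
    (z : Fin n → Fin r) (hz : Function.Surjective z)
    (A : Matrix (Fin n) (Fin n) ℝ) (hA : A.IsSymm) (β : ℝ) :
    (∀ k : Fin r, (Lam A z β).mulVec (indic z k) = 0) ∧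
      Lam A z β * X0 z = 0 :=
  Lam_mulVec_indicator_eq_zero_general n r z A β
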